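/- arXiv:2503.22377 — 2 statements merged into one kernel-verified Lean document; each statement's English description precedes it below -/
import Mathlib

section
/- The following two universally quantified statements are equivalent: (1) for every group G and every e ∈ G such that the conjugacy class C = cl_G(e) is finite and generates G (⟨C⟩ = G), every left translation L_c (c ∈ C) of the conjugation quandle on C contains a regular cycle; (2) for every group G and every e ∈ G such that C = cl_G(e) is finite and ⟨C⟩ = G, the class C is good in G. -/
/-- The conjugacy class of `e` in `G`. -/
def conjClass {G : Type*} [Group G] (e : G) : Set G := {x | ∃ g : G, g * e * g⁻¹ = x}

/-- The left translation `L_c : x ↦ c * x * c⁻¹` on a conjugacy class. -/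
def classTrans {G : Type*} [Group G] {e : G} (c : conjClass e) :
    Equiv.Perm (conjClass e) where
  toFun x := ⟨c * x * (c : G)⁻¹, by
    obtain ⟨g, hg⟩ := x.2
    exact ⟨(c : G) * g, by rw [← hg]; group⟩⟩
  invFun x := ⟨(c : G)⁻¹ * x * c, by
    obtain ⟨g, hg⟩ := x.2
    exact ⟨(c : G)⁻¹ * g, by rw [← hg]; group⟩⟩
  left_inv x := Subtype.ext (by group)
  right_inv x := Subtype.ext (by group)

/-- A permutation contains a regular cycle if some cycle's length (the minimal period
of one of its points) is divisible by the length of every cycle. -/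
def ContainsRegularCycle {Q : Type*} (π : Equiv.Perm Q) : Prop :=
  ∃ z : Q, ∀ x : Q, Function.minimalPeriod (⇑π) x ∣ Function.minimalPeriod (⇑π) z

/-- A conjugacy class `C` is good in `G` if for every `c ∈ C` there is `z ∈ C` such
that every power of `c` commuting with `z` commutes with every element of `⟨C⟩`. -/
def GoodClass {G : Type*} [Group G] (C : Set G) : Prop :=
  ∀ c ∈ C, ∃ z ∈ C, ∀ k : ℤ, c ^ k * z = z * c ^ k →
    ∀ h ∈ Subgroup.closure C, c ^ k * h = h * c ^ k


section HayashiAux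
variable {G : Type*} [Group G] {e : G}

lemma classTrans_iterate (c : conjClass e) (n : ℕ) (x : conjClass e) :
    (((⇑(classTrans c))^[n] x : conjClass e) : G) = (c:G)^n * x * ((c:G)^n)⁻¹ := by
  induction n with
  | zero => simp
  | succ n ih =>
    rw [Function.iterate_succ_apply']
    show (c:G) * (((⇑(classTrans c))^[n] x : conjClass e) : G) * (c:G)⁻¹ = _
    rw [ih]
    group

lemma commute_iff_dvd (c x : conjClass e) (n : ℕ) :
    Commute ((c:G)^n) (x:G) ↔ Function.minimalPeriod (⇑(classTrans c)) x ∣ n := by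
  have key : Function.IsPeriodicPt (⇑(classTrans c)) n x ↔ Commute ((c:G)^n) (x:G) := by
    unfold Function.IsPeriodicPt Function.IsFixedPt
    rw [← Subtype.coe_inj, classTrans_iterate, mul_inv_eq_iff_eq_mul]
    exact Iff.rfl
  constructor
  · intro h
    exact (key.mpr h).minimalPeriod_dvd
  · intro h
    exact key.mp ((Function.isPeriodicPt_minimalPeriod _ _).trans_dvd h)

lemma commute_zpow_iff_natAbs (c z : G) (k : ℤ) :
    Commute (c ^ k) z ↔ Commute (c ^ k.natAbs) z := by
  rcases Int.natAbs_eq k with h | h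
  · conv_lhs => rw [h, zpow_natCast]
  · conv_lhs => rw [h, zpow_neg, zpow_natCast]
    exact Commute.inv_left_iff
end HayashiAux

universe u

/-- Hayashi's conjecture for connected conjugation quandles is equivalent to:
every finite generating conjugacy class is good. -/
theorem hayashi_iff_good :
    (∀ (G : Type u) [Group G] (e : G), (conjClass e).Finite →
        Subgroup.closure (conjClass e) = ⊤ →
        ∀ c : conjClass e, ContainsRegularCycle (classTrans c)) ↔
      (∀ (G : Type u) [Group G] (e : G), (conjClass e).Finite →
        Subgroup.closure (conjClass e) = ⊤ → GoodClass (conjClass e)) := by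
  constructor
  · intro H G _ e hfin hgen c hc
    obtain ⟨z, hz⟩ := H G e hfin hgen ⟨c, hc⟩
    refine ⟨z, z.2, fun k hk h hh => ?_⟩
    have hck : ∀ x ∈ conjClass e, Commute (c ^ k) x := by
      intro x hx
      have h1 : Commute (c ^ k.natAbs) (z : G) := (commute_zpow_iff_natAbs c z k).mp hk
      have h2 : Function.minimalPeriod (⇑(classTrans ⟨c, hc⟩)) z ∣ k.natAbs :=
        (commute_iff_dvd ⟨c, hc⟩ z k.natAbs).mp h1
      have h3 : Function.minimalPeriod (⇑(classTrans ⟨c, hc⟩)) ⟨x, hx⟩ ∣ k.natAbs :=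
        (hz ⟨x, hx⟩).trans h2
      exact (commute_zpow_iff_natAbs c x k).mpr ((commute_iff_dvd ⟨c, hc⟩ ⟨x, hx⟩ k.natAbs).mpr h3)
    refine Subgroup.closure_induction (fun g hg => hck g hg) (Commute.one_right _)
      (fun a b _ _ ha hb => Commute.mul_right ha hb) (fun a _ ha => Commute.inv_right ha) hh
  · intro H G _ e hfin hgen c
    obtain ⟨z, hz, hgood⟩ := H G e hfin hgen c c.2
    refine ⟨⟨z, hz⟩, fun x => ?_⟩
    set N := Function.minimalPeriod (⇑(classTrans c)) (⟨z, hz⟩ : conjClass e) with hN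
    have hcz : Commute ((c:G) ^ N) z := (commute_iff_dvd c ⟨z, hz⟩ N).mpr dvd_rfl
    have hcent := hgood (N : ℤ) (by rw [zpow_natCast]; exact hcz)
    have hcx : Commute ((c:G) ^ N) (x : G) := by
      have := hcent x (Subgroup.subset_closure x.2)
      rwa [zpow_natCast] at this
    exact (commute_iff_dvd c x N).mp hcx
end

section
/- Every finite nilpotent group is good. -/
/-- A group is good if all of its finite conjugacy classes are good in it. -/
def GoodGroup (G : Type*) [Group G] : Prop :=
  ∀ e : G, (conjClass e).Finite → GoodClass (conjClass e)

section Aux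

variable {G : Type*} [Group G]

lemma mem_conjClass_self (c : G) : c ∈ conjClass c := ⟨1, by simp⟩

lemma conjClass_eq_of_mem {c e : G} (h : c ∈ conjClass e) : conjClass c = conjClass e := by
  obtain ⟨w, rfl⟩ := h
  ext x
  constructor
  · rintro ⟨g, rfl⟩; exact ⟨g * w, by group⟩
  · rintro ⟨g, rfl⟩; exact ⟨g * w⁻¹, by group⟩

lemma exists_good_witness {c : G} (hfin : (conjClass c).Finite)
    {p a : ℕ} (hp : p.Prime) (hord : orderOf c = p ^ a) :
    ∃ z ∈ conjClass c, ∀ k : ℤ, c ^ k * z = z * c ^ k →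
      ∀ h ∈ Subgroup.closure (conjClass c), c ^ k * h = h * c ^ k := by
  classical
  set β : G → ℕ := fun z => sInf {b : ℕ | Commute (c ^ p ^ b) z} with hβ
  have hmemset : ∀ z : G, a ∈ {b : ℕ | Commute (c ^ p ^ b) z} := by
    intro z
    simp only [Set.mem_setOf_eq, ← hord, pow_orderOf_eq_one]
    exact Commute.one_left z
  have hβcomm : ∀ z : G, Commute (c ^ p ^ β z) z := fun z => Nat.sInf_mem ⟨a, hmemset z⟩
  have key : ∀ z : G, ∀ k : ℤ, Commute (c ^ k) z ↔ ((p : ℤ) ^ β z ∣ k) := by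
    intro z k
    constructor
    · intro hk
      set A : AddSubgroup ℤ :=
        { carrier := {k : ℤ | Commute (c ^ k) z}
          zero_mem' := by simp
          add_mem' := by
            intro x y hx hy
            simp only [Set.mem_setOf_eq, zpow_add]
            exact Commute.mul_left hx hy
          neg_mem' := by
            intro x hx
            simp only [Set.mem_setOf_eq, zpow_neg]
            exact Commute.inv_left hx } with hA
      obtain ⟨m, hm⟩ := Int.subgroup_cyclic A
      have hmemA : ∀ j : ℤ, Commute (c ^ j) z ↔ m ∣ j := by
        intro j
        have : Commute (c ^ j) z ↔ j ∈ A := Iff.rfl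
        rw [this, hm, AddSubgroup.mem_closure_singleton]
        simp only [zsmul_eq_mul, Int.cast_id]
        exact ⟨fun ⟨n, h⟩ => Dvd.intro_left n h, fun ⟨n, h⟩ => ⟨n, by rw [h]; ring⟩⟩
      have hmdvd : m ∣ ((p : ℤ) ^ a) := by
        rw [← hmemA]
        have : (c : G) ^ ((p : ℤ) ^ a) = 1 := by
          rw [show ((p : ℤ) ^ a) = ((p ^ a : ℕ) : ℤ) by push_cast; ring, zpow_natCast,
            ← hord, pow_orderOf_eq_one]
        rw [this]
        exact Commute.one_left z
      have hnatAbs : m.natAbs ∣ p ^ a := by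
        have := Int.natAbs_dvd_natAbs.mpr hmdvd
        simpa [Int.natAbs_pow] using this
      obtain ⟨b, hba, hb⟩ := (Nat.dvd_prime_pow hp).mp hnatAbs
      have hβleb : β z ≤ b := by
        apply Nat.sInf_le
        have : Commute (c ^ ((p ^ b : ℕ) : ℤ)) z := by
          rw [hmemA]
          rw [show ((p ^ b : ℕ) : ℤ) = (m.natAbs : ℤ) by rw [hb]]
          exact Int.dvd_natAbs.mpr dvd_rfl
        rwa [zpow_natCast] at this
      have hmk : m ∣ k := (hmemA k).mp hk
      have h1 : ((p : ℤ) ^ b) ∣ k := by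
        have : ((m.natAbs : ℤ)) ∣ k := Int.natAbs_dvd.mpr hmk
        rwa [hb, Nat.cast_pow] at this
      exact dvd_trans (pow_dvd_pow _ hβleb) h1
    · rintro ⟨t, rfl⟩
      have h1 : (c : G) ^ ((p : ℤ) ^ β z * t) = (c ^ (p ^ β z : ℕ)) ^ t := by
        rw [zpow_mul]
        congr 1
        rw [show ((p : ℤ) ^ β z) = ((p ^ β z : ℕ) : ℤ) by push_cast; ring, zpow_natCast]
      rw [h1]
      exact Commute.zpow_left (hβcomm z) t
  obtain ⟨z, hzmem, hzmax⟩ := Set.exists_max_image (conjClass c) β hfin ⟨c, mem_conjClass_self c⟩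
  refine ⟨z, hzmem, ?_⟩
  intro k hk h hh
  have hdvd : (p : ℤ) ^ β z ∣ k := (key z k).mp hk
  have hC : ∀ x ∈ conjClass c, Commute (c ^ k) x := fun x hx =>
    (key x k).mpr (dvd_trans (pow_dvd_pow _ (hzmax x hx)) hdvd)
  have hle : Subgroup.closure (conjClass c) ≤ Subgroup.centralizer {c ^ k} := by
    rw [Subgroup.closure_le]
    intro x hx
    rw [SetLike.mem_coe, Subgroup.mem_centralizer_iff]
    intro g hg
    rw [Set.mem_singleton_iff] at hg
    subst hg
    exact hC x hx
  exact Subgroup.mem_centralizer_iff.mp (hle hh) _ (Set.mem_singleton _)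

lemma goodGroup_primepow (H : Type*) [Group H] [Finite H]
    (h : ∀ x : H, ∃ p k, Nat.Prime p ∧ orderOf x = p ^ k) : GoodGroup H := by
  intro e _ c hc
  rw [← conjClass_eq_of_mem hc]
  obtain ⟨p, a, hp, ha⟩ := h c
  exact exists_good_witness (Set.toFinite _) hp ha

lemma goodGroup_pi {ι : Type*} (f : ι → Type*) [∀ i, Group (f i)] [∀ i, Finite (f i)]
    (h : ∀ i, GoodGroup (f i)) : GoodGroup (∀ i, f i) := by
  intro e _ c hc
  have hci : ∀ i, c i ∈ conjClass (e i) := by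
    obtain ⟨g, rfl⟩ := hc
    exact fun i => ⟨g i, rfl⟩
  have hgood := fun i => h i (c i) (Set.toFinite _) (c i) (mem_conjClass_self _)
  choose z hz hzp using hgood
  have hzmem : (z : ∀ i, f i) ∈ conjClass e := by
    choose g hg using hz
    choose w hw using hci
    refine ⟨fun i => g i * w i, funext fun i => ?_⟩
    simp only [Pi.mul_apply, Pi.inv_apply]
    rw [← hg i, ← hw i]
    group
  refine ⟨z, hzmem, ?_⟩
  intro k hk x hx
  have hki : ∀ i, (c i) ^ k * z i = z i * (c i) ^ k := by
    intro i
    have := congrFun hk i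
    simpa using this
  have hle : Subgroup.closure (conjClass e) ≤
      Subgroup.pi Set.univ (fun i => Subgroup.closure (conjClass (e i))) := by
    rw [Subgroup.closure_le]
    rintro y ⟨g, rfl⟩
    rw [SetLike.mem_coe, Subgroup.mem_pi]
    intro i _
    exact Subgroup.subset_closure ⟨g i, rfl⟩
  funext i
  simp only [Pi.mul_apply, Pi.pow_apply]
  apply hzp i k (hki i)
  rw [conjClass_eq_of_mem (hci i)]
  exact (Subgroup.mem_pi Set.univ).mp (hle hx) i (Set.mem_univ i)

lemma goodGroup_of_mulEquiv {G₁ H : Type*} [Group G₁] [Group H] (φ : G₁ ≃* H)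
    (hG : GoodGroup G₁) : GoodGroup H := by
  intro e hfin c hc
  have himg : ∀ x y : H, x ∈ conjClass y → φ.symm x ∈ conjClass (φ.symm y) := by
    rintro x y ⟨g, rfl⟩
    exact ⟨φ.symm g, by simp [map_mul]⟩
  have hfin' : (conjClass (φ.symm e)).Finite := by
    have hsub : conjClass (φ.symm e) ⊆ φ.symm '' conjClass e := by
      rintro x ⟨g, rfl⟩
      exact ⟨φ g * e * (φ g)⁻¹, ⟨φ g, rfl⟩, by simp [map_mul]⟩
    exact (hfin.image _).subset hsub
  obtain ⟨z0, hz0, hprop⟩ := hG (φ.symm e) hfin' (φ.symm c) (himg _ _ hc)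
  refine ⟨φ z0, ?_, ?_⟩
  · obtain ⟨g, hg⟩ := hz0
    exact ⟨φ g, by rw [← hg]; simp [map_mul]⟩
  · intro k hk x hx
    have hk' : (φ.symm c) ^ k * z0 = z0 * (φ.symm c) ^ k := by
      have := congrArg φ.symm hk
      simpa [map_mul, map_zpow] using this
    have hxmem : φ.symm x ∈ Subgroup.closure (conjClass (φ.symm e)) := by
      have hle : Subgroup.closure (conjClass e) ≤
          (Subgroup.closure (conjClass (φ.symm e))).comap (φ.symm : H →* G₁) := by
        rw [Subgroup.closure_le]
        intro y hy
        exact Subgroup.subset_closure (himg y e hy)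
      exact hle hx
    have := hprop k hk' (φ.symm x) hxmem
    apply φ.symm.injective
    simpa [map_mul, map_zpow] using this

end Aux

/-- Every finite nilpotent group is good. -/
theorem goodGroup_of_finite_nilpotent (G : Type*) [Group G] [Finite G]
    [Group.IsNilpotent G] : GoodGroup G := by
  obtain ⟨φ⟩ := ((isNilpotent_of_finite_tfae (G := G)).out 0 4).mp ‹Group.IsNilpotent G›
  apply goodGroup_of_mulEquiv φ
  apply goodGroup_pi
  intro p
  apply goodGroup_pi
  intro P
  apply goodGroup_primepow
  intro x
  haveI : Fact (Nat.Prime (p : ℕ)) := ⟨Nat.prime_of_mem_primeFactors p.2⟩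
  obtain ⟨k, hk⟩ := IsPGroup.iff_orderOf.mp P.isPGroup' x
  exact ⟨p, k, Nat.prime_of_mem_primeFactors p.2, hk⟩
end
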